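/- Let q ∈ (0,1), θ > 0 and γ ∈ ℝ with θ + γ > 0. Define, for Z ∈ ℂ with Re Z > 0, Re f₀(Z) = −f(θ)(log q) Re Z + κ(θ) Re(q^Z) + Σ_{k=0}^∞ log|1 − q^{Z+k}|. Then the function t ↦ Re f₀(θ + γ + it) is differentiable on ℝ and its derivative at every t ∈ ℝ equals −sin(t log q) · log q · Σ_{k=0}^∞ q^{θ+γ+k} ( 1/(1 − q^{θ+k})² − 1/|1 − q^{θ+γ+it+k}|² ). -/

import Mathlib

/-!
On the vertical line `Re Z = c` put `r k = q ^ (c + k)` and `L = log q`, so that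
`q ^ (c + i s + k) = r k · e^{i s L}`. Then `Re f₀(c + i s)` is a constant plus
`κ q^c cos (s L) + ∑ₖ ½ log (1 - 2 r k cos (s L) + r k ^ 2)`. Since `0 ≤ r k ≤ q ^ c < 1` and
`∑ r k < ∞`, the termwise derivatives `r k L sin (s L) / |1 - r k e^{i s L}|²` are dominated by
`|L| r k / (1 - q^c)²`, so the series may be differentiated termwise; writing
`κ q^c = ∑ₖ r k / (1 - q^(θ+k))²` combines the two contributions into one series.
-/

open Complex (I)

lemma ofReal_cpow_ofReal_add_mul_I {q : ℝ} (hq : 0 < q) (x s : ℝ) :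
    (q : ℂ) ^ ((x : ℂ) + s * I) = (q ^ x : ℝ) * Complex.exp ((s * Real.log q : ℝ) * I) := by
  rw [Complex.cpow_def_of_ne_zero (by exact_mod_cast hq.ne'), ← Complex.ofReal_log hq.le,
    Real.rpow_def_of_pos hq, Complex.ofReal_exp, ← Complex.exp_add]
  congr 1
  push_cast
  ring

lemma norm_one_sub_ofReal_mul_exp_ofReal_mul_I_sq (r a : ℝ) :
    ‖1 - (r : ℂ) * Complex.exp (a * I)‖ ^ 2 = 1 - 2 * r * Real.cos a + r ^ 2 := by
  rw [Complex.sq_norm, Complex.normSq_apply]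
  simp only [Complex.sub_re, Complex.one_re, Complex.re_ofReal_mul, Complex.exp_ofReal_mul_I_re,
    Complex.sub_im, Complex.one_im, Complex.im_ofReal_mul, Complex.exp_ofReal_mul_I_im]
  nlinarith [Real.sin_sq_add_cos_sq a]

lemma sq_one_sub_le_norm_one_sub_ofReal_mul_exp_ofReal_mul_I_sq {r : ℝ} (hr : 0 ≤ r) (a : ℝ) :
    (1 - r) ^ 2 ≤ ‖1 - (r : ℂ) * Complex.exp (a * I)‖ ^ 2 := by
  rw [norm_one_sub_ofReal_mul_exp_ofReal_mul_I_sq]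
  nlinarith [Real.cos_le_one a]

lemma hasDerivAt_log_norm_one_sub_ofReal_mul_exp {r : ℝ} (a s : ℝ)
    (hs : 1 - (r : ℂ) * Complex.exp ((s * a : ℝ) * I) ≠ 0) :
    HasDerivAt (fun s : ℝ => Real.log ‖1 - (r : ℂ) * Complex.exp ((s * a : ℝ) * I)‖)
      (r * a * Real.sin (s * a) / ‖1 - (r : ℂ) * Complex.exp ((s * a : ℝ) * I)‖ ^ 2) s := by
  have hN : 0 < ‖1 - (r : ℂ) * Complex.exp ((s * a : ℝ) * I)‖ ^ 2 := by positivity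
  have hlog : (fun s : ℝ => Real.log ‖1 - (r : ℂ) * Complex.exp ((s * a : ℝ) * I)‖)
      = fun s => Real.log (1 - 2 * r * Real.cos (s * a) + r ^ 2) / 2 := by
    funext s
    rw [← norm_one_sub_ofReal_mul_exp_ofReal_mul_I_sq, Real.log_pow]
    push_cast
    ring
  have hD : HasDerivAt (fun s => 1 - 2 * r * Real.cos (s * a) + r ^ 2)
      (2 * r * a * Real.sin (s * a)) s := by
    refine ((((hasDerivAt_mul_const a).cos.const_mul (2 * r)).const_sub 1).add_const
      (r ^ 2)).congr_deriv ?_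
    ring
  rw [norm_one_sub_ofReal_mul_exp_ofReal_mul_I_sq] at hN ⊢
  rw [hlog]
  exact ((hD.log hN.ne').div_const 2).congr_deriv (by ring)

theorem hasDerivAt_tsum_log_norm_one_sub_ofReal_mul_exp {ι : Type*} {r : ι → ℝ} {ρ : ℝ} (hr : Summable r)
    (hr0 : ∀ k, 0 ≤ r k) (hrρ : ∀ k, r k ≤ ρ) (hρ : ρ < 1) (a t : ℝ) :
    HasDerivAt (fun s : ℝ => ∑' k, Real.log ‖1 - (r k : ℂ) * Complex.exp ((s * a : ℝ) * I)‖)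
      (∑' k, r k * a * Real.sin (t * a) /
        ‖1 - (r k : ℂ) * Complex.exp ((t * a : ℝ) * I)‖ ^ 2) t := by
  have hlow : ∀ k (x : ℝ), (1 - ρ) ^ 2 ≤ ‖1 - (r k : ℂ) * Complex.exp (x * I)‖ ^ 2 := fun k x =>
    (pow_le_pow_left₀ (by linarith) (by linarith [hrρ k]) 2).trans
      (sq_one_sub_le_norm_one_sub_ofReal_mul_exp_ofReal_mul_I_sq (hr0 k) x)
  have hρ2 : 0 < (1 - ρ) ^ 2 := by nlinarith
  have hne : ∀ k (x : ℝ), 1 - (r k : ℂ) * Complex.exp (x * I) ≠ 0 := fun k x h => by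
    have := hlow k x
    rw [h, norm_zero] at this
    linarith
  refine hasDerivAt_tsum (u := fun k => |a| / (1 - ρ) ^ 2 * r k) (y₀ := t) (hr.mul_left _)
    (fun k s => hasDerivAt_log_norm_one_sub_ofReal_mul_exp a s (hne k _)) (fun k s => ?_) ?_ t
  · rw [Real.norm_eq_abs, abs_div, abs_mul, abs_mul, abs_of_nonneg (hr0 k), abs_of_pos
      (lt_of_lt_of_le hρ2 (hlow k _)), div_le_iff₀ (lt_of_lt_of_le hρ2 (hlow k _))]
    calc r k * |a| * |Real.sin (s * a)| ≤ r k * |a| :=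
          mul_le_of_le_one_right (mul_nonneg (hr0 k) (abs_nonneg a)) (Real.abs_sin_le_one _)
      _ = |a| / (1 - ρ) ^ 2 * r k * (1 - ρ) ^ 2 := by field_simp [(sub_pos.2 hρ).ne']
      _ ≤ _ := mul_le_mul_of_nonneg_left (hlow k _) (mul_nonneg (by positivity) (hr0 k))
  · refine (Summable.summable_log_norm_one_add (f := fun k => -((r k : ℂ) *
      Complex.exp ((t * a : ℝ) * I))) ?_).congr fun k => by simp [sub_eq_add_neg]
    refine hr.congr fun k => ?_
    rw [norm_neg, norm_mul, Complex.norm_exp_ofReal_mul_I, Complex.norm_real, Real.norm_eq_abs,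
      abs_of_nonneg (hr0 k), mul_one]

lemma summable_rpow_add_natCast {q : ℝ} (hq0 : 0 < q) (hq1 : q < 1) (x : ℝ) :
    Summable fun k : ℕ => q ^ (x + k) := by
  simpa only [Real.rpow_add hq0, Real.rpow_natCast] using
    (summable_geometric_of_lt_one hq0.le hq1).mul_left (q ^ x)

lemma sq_one_sub_rpow_le_sq_one_sub_rpow_add_natCast {q : ℝ} (hq0 : 0 < q) (hq1 : q < 1)
    {x : ℝ} (hx : 0 ≤ x) (k : ℕ) : (1 - q ^ x) ^ 2 ≤ (1 - q ^ (x + k)) ^ 2 :=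
  pow_le_pow_left₀ (sub_nonneg.2 (Real.rpow_le_one hq0.le hq1.le hx))
    (sub_le_sub_left (Real.rpow_le_rpow_of_exponent_ge hq0 hq1.le (by simp)) 1) 2

lemma sq_one_sub_rpow_le_norm_one_sub_cpow_sq {q : ℝ} (hq : 0 < q) (x s : ℝ) :
    (1 - q ^ x) ^ 2 ≤ ‖1 - (q : ℂ) ^ ((x : ℂ) + s * I)‖ ^ 2 := by
  rw [ofReal_cpow_ofReal_add_mul_I hq]
  exact sq_one_sub_le_norm_one_sub_ofReal_mul_exp_ofReal_mul_I_sq (Real.rpow_nonneg hq.le x) _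

lemma Summable.mul_of_nonneg_of_le_const {ι : Type*} {r g : ι → ℝ} (hr : Summable r) (hr0 : ∀ k, 0 ≤ r k)
    (hg0 : ∀ k, 0 ≤ g k) {C : ℝ} (hgC : ∀ k, g k ≤ C) : Summable fun k => r k * g k :=
  (hr.mul_right C).of_nonneg_of_le (fun k => mul_nonneg (hr0 k) (hg0 k))
    fun k => mul_le_mul_of_nonneg_left (hgC k) (hr0 k)

noncomputable def reF₀ (q κ f : ℝ) (Z : ℂ) : ℝ :=
  -f * Real.log q * Z.re + κ * ((q : ℂ) ^ Z).re + ∑' k : ℕ, Real.log ‖1 - (q : ℂ) ^ (Z + (k : ℕ))‖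

theorem hasDerivAt_reF₀_vertical {q : ℝ} (hq0 : 0 < q) (hq1 : q < 1) {c : ℝ} (hc : 0 < c)
    (κ f t : ℝ) :
    HasDerivAt (fun s : ℝ => reF₀ q κ f (c + s * I))
      (-Real.sin (t * Real.log q) * Real.log q *
        (κ * q ^ c - ∑' k : ℕ, q ^ (c + k) / ‖1 - (q : ℂ) ^ (((c + k : ℝ) : ℂ) + t * I)‖ ^ 2)) t := by
  have hshift : ∀ (s : ℝ) (k : ℕ), (c : ℂ) + s * I + k = ((c + k : ℝ) : ℂ) + s * I := fun s k => by
    push_cast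
    ring
  have hfun : (fun s : ℝ => reF₀ q κ f (c + s * I)) = fun s => -f * Real.log q * c +
      κ * (q ^ c * Real.cos (s * Real.log q)) +
      ∑' k : ℕ, Real.log ‖1 - ((q ^ (c + k) : ℝ) : ℂ) * Complex.exp ((s * Real.log q : ℝ) * I)‖ := by
    funext s
    simp only [reF₀, hshift, ofReal_cpow_ofReal_add_mul_I hq0, Complex.add_re,
      Complex.ofReal_re, Complex.re_ofReal_mul, Complex.exp_ofReal_mul_I_re, Complex.I_re, mul_zero,
      add_zero]
  have hcos : HasDerivAt (fun s => κ * (q ^ c * Real.cos (s * Real.log q)))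
      (κ * (q ^ c * (-Real.sin (t * Real.log q) * Real.log q))) t :=
    ((hasDerivAt_mul_const (Real.log q)).cos.const_mul _).const_mul _
  have hseries := hasDerivAt_tsum_log_norm_one_sub_ofReal_mul_exp
    (summable_rpow_add_natCast hq0 hq1 c) (fun k => (Real.rpow_pos_of_pos hq0 _).le)
    (fun k => Real.rpow_le_rpow_of_exponent_ge hq0 hq1.le (by simp))
    (Real.rpow_lt_one hq0.le hq1 hc) (Real.log q) t
  rw [hfun]
  refine (((hasDerivAt_const t _).add hcos).add hseries).congr_deriv ?_
  simp only [ofReal_cpow_ofReal_add_mul_I hq0]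
  rw [mul_sub, ← tsum_mul_left, zero_add, sub_eq_add_neg, ← tsum_neg]
  congr 1
  · ring
  · exact tsum_congr fun k => by ring

/-- For `q ∈ (0,1)`, `θ > 0` and `γ` with `θ + γ > 0`, the map
`t ↦ Re f₀(θ+γ+it)` is differentiable with derivative
`−sin(t log q) · log q · Σ_{k=0}^∞ q^(θ+γ+k)(1/(1−q^(θ+k))² − 1/|1−q^(θ+γ+it+k)|²)`. -/
theorem stmt_16 (q θ γ : ℝ) (hq : q ∈ Set.Ioo (0 : ℝ) 1) (hθ : 0 < θ)
    (hγ : 0 < θ + γ) :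
    let κ : ℝ := ∑' k : ℕ, q ^ (k : ℕ) / (1 - q ^ (θ + (k : ℝ))) ^ 2
    let f : ℝ := ∑' k : ℕ, q ^ (2 * θ + 2 * (k : ℝ)) / (1 - q ^ (θ + (k : ℝ))) ^ 2
    let F : ℂ → ℝ := fun Z =>
      -f * Real.log q * Z.re + κ * ((q : ℂ) ^ Z).re
        + ∑' k : ℕ, Real.log ‖(1 - (q : ℂ) ^ (Z + (k : ℕ)))‖
    ∀ t : ℝ,
      HasDerivAt (fun s : ℝ => F (((θ + γ : ℝ) : ℂ) + (s : ℂ) * Complex.I))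
        (-Real.sin (t * Real.log q) * Real.log q *
          ∑' k : ℕ,
            q ^ (θ + γ + (k : ℝ)) *
              (1 / (1 - q ^ (θ + (k : ℝ))) ^ 2
                - 1 / ‖
                    (1 - (q : ℂ) ^ (((θ + γ + (k : ℝ) : ℝ) : ℂ) + (t : ℂ) * Complex.I))‖ ^ 2)) t := by
  intro κ f F t
  obtain ⟨hq0, hq1⟩ := hq
  have hr := summable_rpow_add_natCast hq0 hq1 (θ + γ)
  have hr0 : ∀ k : ℕ, 0 ≤ q ^ (θ + γ + k) := fun k => (Real.rpow_pos_of_pos hq0 _).le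
  have hA : Summable fun k : ℕ => q ^ (θ + γ + k) * (1 / (1 - q ^ (θ + k)) ^ 2) :=
    hr.mul_of_nonneg_of_le_const hr0 (fun k => by positivity) fun k =>
      one_div_le_one_div_of_le (pow_pos (sub_pos.2 (Real.rpow_lt_one hq0.le hq1 hθ)) 2)
        (sq_one_sub_rpow_le_sq_one_sub_rpow_add_natCast hq0 hq1 hθ.le k)
  have hB : Summable fun k : ℕ =>
      q ^ (θ + γ + k) / ‖1 - (q : ℂ) ^ (((θ + γ + k : ℝ) : ℂ) + t * I)‖ ^ 2 := by
    simpa only [mul_one_div] using hr.mul_of_nonneg_of_le_const hr0 (fun k => by positivity)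
      fun k => one_div_le_one_div_of_le
        (pow_pos (sub_pos.2 (Real.rpow_lt_one hq0.le hq1 hγ)) 2)
        ((sq_one_sub_rpow_le_sq_one_sub_rpow_add_natCast hq0 hq1 hγ.le k).trans
          (sq_one_sub_rpow_le_norm_one_sub_cpow_sq hq0 _ t))
  have hκ : κ * q ^ (θ + γ) = ∑' k : ℕ, q ^ (θ + γ + k) * (1 / (1 - q ^ (θ + k)) ^ 2) := by
    rw [← tsum_mul_right]
    exact tsum_congr fun k => by rw [Real.rpow_add hq0 (θ + γ), Real.rpow_natCast]; ring
  refine (hasDerivAt_reF₀_vertical hq0 hq1 hγ κ f t).congr_deriv ?_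
  rw [hκ, ← hA.tsum_sub hB]
  exact congrArg _ (tsum_congr fun k => by ring)
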